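/- arXiv:2111.05207 — 3 statements merged into one kernel-verified Lean document; each statement's English description precedes it below -/
import Mathlib

section
/- The reverse Jacobian sparsity algorithm is correct: after initializing Y_k = {k − ℓ + m} for k > ℓ − m with k − ℓ + m ∈ I, Y_k = ∅ otherwise, and then for k = ℓ − m down to 1 updating Y_{a[k']} and Y_{b[k']} by union with Y_{k'} for every k' > k with operands a[k'] or b[k'] equal (processed in decreasing order of k'), the final value of Y_k equals { i ∈ I : k = ℓ − m + i or k ≺* ℓ − m + i }. -/
/-- Direct dependency relation: `j ≺ k` iff `j = a k` or `j = b k`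
for an elementary-operation node `k` with `n < k ≤ ℓ`. -/
def prec (n ℓ : ℕ) (a b : ℕ → ℕ) (j k : ℕ) : Prop :=
  n < k ∧ k ≤ ℓ ∧ (j = a k ∨ j = b k)

/-- `≺*`, the transitive closure of `≺`. -/
def precStar (n ℓ : ℕ) (a b : ℕ → ℕ) : ℕ → ℕ → Prop :=
  Relation.TransGen (prec n ℓ a b)

/-- One step of the reverse sweep at node `k`:
`Y (a k) := Y (a k) ∪ Y k` and `Y (b k) := Y (b k) ∪ Y k`. -/
def stepY (a b : ℕ → ℕ) (Y : ℕ → Set ℕ) (k : ℕ) : ℕ → Set ℕ :=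
  fun p => Y p ∪ {i | (p = a k ∨ p = b k) ∧ i ∈ Y k}

/-- The reverse sweep processes nodes `k = ℓ, ℓ-1, …, n+1` in decreasing order. -/
def sweepY (a b : ℕ → ℕ) (n ℓ : ℕ) (Y0 : ℕ → Set ℕ) : ℕ → Set ℕ :=
  ((List.range (ℓ - n)).map (fun t => ℓ - t)).foldl (stepY a b) Y0

/-- Invariant set after processing all nodes `> j`. -/
def Pset (n m ℓ : ℕ) (a b : ℕ → ℕ) (I : Set ℕ) (j k : ℕ) : Set ℕ :=
  {i | i ∈ I ∧ (k = ℓ - m + i ∨ ∃ k', j < k' ∧ prec n ℓ a b k k' ∧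
    (k' = ℓ - m + i ∨ precStar n ℓ a b k' (ℓ - m + i)))}

lemma exists_prec_iff (n ℓ : ℕ) (a b : ℕ → ℕ) (k j x : ℕ)
    (hj : ∀ k', prec n ℓ a b k k' → j < k') :
    (∃ k', j < k' ∧ prec n ℓ a b k k' ∧ (k' = x ∨ precStar n ℓ a b k' x)) ↔
      precStar n ℓ a b k x := by
  constructor
  · rintro ⟨k', -, h2, h3 | h3⟩
    · subst h3; exact Relation.TransGen.single h2
    · exact Relation.TransGen.head h2 h3
  · intro h
    obtain ⟨c, h1, h2⟩ := Relation.TransGen.head'_iff.mp h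
    rcases Relation.reflTransGen_iff_eq_or_transGen.mp h2 with rfl | h3
    · exact ⟨x, hj _ h1, h1, Or.inl rfl⟩
    · exact ⟨c, hj _ h1, h1, Or.inr h3⟩

lemma sweep_partial (n m ℓ : ℕ) (a b : ℕ → ℕ)
    (hn : n ≤ ℓ)
    (ha : ∀ k, n < k → k ≤ ℓ → a k < k ∧ 1 ≤ a k)
    (hb : ∀ k, n < k → k ≤ ℓ → b k < k ∧ 1 ≤ b k)
    (I : Set ℕ) (Y0 : ℕ → Set ℕ)
    (hY0 : ∀ k, Y0 k = {i | i ∈ I ∧ k = ℓ - m + i}) :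
    ∀ d, d ≤ ℓ - n → ∀ k,
      ((List.range d).map (fun t => ℓ - t)).foldl (stepY a b) Y0 k =
        Pset n m ℓ a b I (ℓ - d) k := by
  intro d
  induction d with
  | zero =>
    intro _ k
    simp only [List.range_zero, List.map_nil, List.foldl_nil, Nat.sub_zero]
    rw [hY0]
    ext i
    simp only [Pset, Set.mem_setOf_eq]
    constructor
    · rintro ⟨hi, h⟩; exact ⟨hi, Or.inl h⟩
    · rintro ⟨hi, h | ⟨k', h1, ⟨-, h2, -⟩, -⟩⟩
      · exact ⟨hi, h⟩
      · omega
  | succ d IH =>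
    intro hd k
    have hd' : d ≤ ℓ - n := by omega
    have hcℓ : ℓ - d ≤ ℓ := by omega
    have hnc : n < ℓ - d := by omega
    have hjc : ℓ - d = (ℓ - (d + 1)) + 1 := by omega
    rw [List.range_succ, List.map_append, List.foldl_append]
    simp only [List.map_cons, List.map_nil, List.foldl_cons, List.foldl_nil]
    set c := ℓ - d with hc
    set j := ℓ - (d + 1) with hj'
    have hprev : ∀ p, ((List.range d).map (fun t => ℓ - t)).foldl (stepY a b) Y0 p =
        Pset n m ℓ a b I c p := IH hd'
    have hcc : ∀ k', prec n ℓ a b c k' → c < k' := by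
      rintro k' ⟨h1, h2, h3 | h3⟩
      · have := (ha k' h1 h2).1; omega
      · have := (hb k' h1 h2).1; omega
    have hPc : ∀ i, i ∈ Pset n m ℓ a b I c c ↔
        (i ∈ I ∧ (c = ℓ - m + i ∨ precStar n ℓ a b c (ℓ - m + i))) := by
      intro i
      simp only [Pset, Set.mem_setOf_eq]
      rw [exists_prec_iff n ℓ a b c c (ℓ - m + i) hcc]
    show stepY a b _ c k = _
    simp only [stepY, hprev]
    ext i
    simp only [Set.mem_union, Set.mem_setOf_eq, Pset]
    constructor
    · rintro (⟨hi, h | ⟨k', h1, h2, h3⟩⟩ | ⟨hk, hic⟩)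
      · exact ⟨hi, Or.inl h⟩
      · exact ⟨hi, Or.inr ⟨k', by omega, h2, h3⟩⟩
      · rcases (hPc i).1 hic with ⟨hi, h⟩
        refine ⟨hi, Or.inr ⟨c, by omega, ⟨hnc, hcℓ, hk⟩, ?_⟩⟩
        exact h
    · rintro ⟨hi, h | ⟨k', h1, h2, h3⟩⟩
      · exact Or.inl ⟨hi, Or.inl h⟩
      · by_cases hkc : k' = c
        · subst hkc
          refine Or.inr ⟨h2.2.2, (hPc i).2 ⟨hi, ?_⟩⟩
          rcases h3 with h3 | h3
          · exact Or.inl h3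
          · exact Or.inr h3
        · exact Or.inl ⟨hi, Or.inr ⟨k', by omega, h2, h3⟩⟩

/-- Correctness of the reverse Jacobian sparsity algorithm (Algorithm 2). -/
theorem stmt_4 (n m ℓ : ℕ) (a b : ℕ → ℕ)
    (hn : n ≤ ℓ) (hm : m ≤ ℓ)
    (ha : ∀ k, n < k → k ≤ ℓ → a k < k ∧ 1 ≤ a k)
    (hb : ∀ k, n < k → k ≤ ℓ → b k < k ∧ 1 ≤ b k)
    (I : Set ℕ) (hI : I ⊆ Set.Icc 1 m)
    (Y0 : ℕ → Set ℕ)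
    (hY0 : ∀ k, Y0 k = {i | i ∈ I ∧ k = ℓ - m + i}) :
    ∀ k, 1 ≤ k → k ≤ ℓ →
      sweepY a b n ℓ Y0 k =
        {i | i ∈ I ∧ (k = ℓ - m + i ∨ precStar n ℓ a b k (ℓ - m + i))} := by
  intro k _ _
  have := sweep_partial n m ℓ a b hn ha hb I Y0 hY0 (ℓ - n) le_rfl k
  rw [sweepY, this]
  have hjn : ℓ - (ℓ - n) = n := by omega
  rw [hjn]
  ext i
  simp only [Pset, Set.mem_setOf_eq]
  have hnk : ∀ k', prec n ℓ a b k k' → n < k' := fun k' h => h.1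
  rw [exists_prec_iff n ℓ a b k n (ℓ - m + i) hnk]
end

section
/- The mark vector need not be cleared between searches: if the searches for distinct dependent indices i ≠ i' use distinct marks (done = i and done = i'), then the search for i' is unaffected by marks left from the search for i, and produces the same set S_{i'} as a search with a freshly initialized mark vector. -/
/-- Processing one operand `ν` in Algorithm 3. -/
def visit (n done ignore : ℕ) (ν : ℕ)
    (st : List ℕ × (ℕ → ℕ) × Set ℕ) : List ℕ × (ℕ → ℕ) × Set ℕ :=
  let (K, c, S) := st
  if c ν = done ∨ c ν = ignore then (K, c, S)
  else if ν ≤ n then (K, Function.update c ν done, insert ν S)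
  else (ν :: K, Function.update c ν done, S)

/-- The DFS of Algorithm 3 with explicit fuel, returning final marks and set. -/
def dfs (a b : ℕ → ℕ) (n done ignore : ℕ) :
    ℕ → List ℕ → (ℕ → ℕ) → Set ℕ → Option ((ℕ → ℕ) × Set ℕ)
  | 0, _, _, _ => none
  | _ + 1, [], c, S => some (c, S)
  | fuel + 1, k :: K, c, S =>
      let st := visit n done ignore (b k) (visit n done ignore (a k) (K, c, S))
      dfs a b n done ignore fuel st.1 st.2.1 st.2.2

/-- Two mark vectors are equivalent for a search with marks `d`, `ig` if they
agree on the skip condition of `visit`. -/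
def MarkRel (d ig : ℕ) (c c' : ℕ → ℕ) : Prop :=
  ∀ ν, (c ν = d ∨ c ν = ig) ↔ (c' ν = d ∨ c' ν = ig)

lemma visit_marks (n d ig ν : ℕ) (st : List ℕ × (ℕ → ℕ) × Set ℕ) :
    ∀ μ, (visit n d ig ν st).2.1 μ = st.2.1 μ ∨
      ((visit n d ig ν st).2.1 μ = d ∧ st.2.1 μ ≠ ig) := by
  obtain ⟨K, c, S⟩ := st
  intro μ
  unfold visit
  by_cases h1 : c ν = d ∨ c ν = ig
  · simp [h1]
  · push_neg at h1
    by_cases hμ : μ = ν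
    · subst hμ
      by_cases h3 : μ ≤ n <;> simp [h1, h3, Function.update, h1.2]
    · by_cases h3 : ν ≤ n <;> simp [h1.1, h1.2, h3, Function.update, hμ]

lemma dfs_marks (a b : ℕ → ℕ) (n d ig : ℕ) :
    ∀ f K c S cf Sf, dfs a b n d ig f K c S = some (cf, Sf) →
      ∀ μ, cf μ = c μ ∨ (cf μ = d ∧ c μ ≠ ig) := by
  intro f
  induction f with
  | zero => intro K c S cf Sf h; simp [dfs] at h
  | succ f ih =>
    intro K c S cf Sf h μ
    cases K with
    | nil =>
      simp [dfs] at h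
      rw [← h.1]
      left; rfl
    | cons k K =>
      simp only [dfs] at h
      have h1 := visit_marks n d ig (a k) (K, c, S) μ
      have h2 := visit_marks n d ig (b k) (visit n d ig (a k) (K, c, S)) μ
      have h3 := ih _ _ _ _ _ h μ
      dsimp only at h1 h2 h3 ⊢
      omega

lemma visit_sim (n d ig ν : ℕ) (st st' : List ℕ × (ℕ → ℕ) × Set ℕ)
    (hK : st.1 = st'.1) (hS : st.2.2 = st'.2.2) (hR : MarkRel d ig st.2.1 st'.2.1) :
    (visit n d ig ν st).1 = (visit n d ig ν st').1 ∧
    (visit n d ig ν st).2.2 = (visit n d ig ν st').2.2 ∧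
    MarkRel d ig (visit n d ig ν st).2.1 (visit n d ig ν st').2.1 := by
  obtain ⟨K, c, S⟩ := st
  obtain ⟨K', c', S'⟩ := st'
  simp only at hK hS hR
  subst hK; subst hS
  unfold visit
  by_cases h1 : c ν = d ∨ c ν = ig
  · have h2 : c' ν = d ∨ c' ν = ig := (hR ν).1 h1
    simp [h1, h2, hR]
  · have h2 : ¬(c' ν = d ∨ c' ν = ig) := fun hh => h1 ((hR ν).2 hh)
    have hRel : MarkRel d ig (Function.update c ν d) (Function.update c' ν d) := by
      intro μ
      by_cases hμ : μ = ν
      · subst hμ; simp [Function.update]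
      · simp only [Function.update, dif_neg hμ]
        exact hR μ
    by_cases h3 : ν ≤ n
    · simp only [h1, h2, h3, if_true, if_false]
      exact ⟨trivial, trivial, hRel⟩
    · simp only [h1, h2, h3, if_true, if_false]
      exact ⟨trivial, trivial, hRel⟩

lemma dfs_sim (a b : ℕ → ℕ) (n d ig : ℕ) :
    ∀ f f' K c c' S cf Sf cf' Sf',
      MarkRel d ig c c' →
      dfs a b n d ig f K c S = some (cf, Sf) →
      dfs a b n d ig f' K c' S = some (cf', Sf') →
      Sf = Sf' := by
  intro f
  induction f with
  | zero => intro f' K c c' S cf Sf cf' Sf' _ h _; simp [dfs] at h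
  | succ f ih =>
    intro f' K c c' S cf Sf cf' Sf' hR h h'
    cases f' with
    | zero => simp [dfs] at h'
    | succ f' =>
      cases K with
      | nil =>
        simp [dfs] at h h'
        rw [← h.2, ← h'.2]
      | cons k K =>
        simp only [dfs] at h h'
        obtain ⟨hK1, hS1, hR1⟩ :=
          visit_sim n d ig (a k) (K, c, S) (K, c', S) rfl rfl hR
        obtain ⟨hK2, hS2, hR2⟩ :=
          visit_sim n d ig (b k) (visit n d ig (a k) (K, c, S))
            (visit n d ig (a k) (K, c', S)) hK1 hS1 hR1
        rw [← hK2, ← hS2] at h'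
        exact ih f' _ _ _ _ _ _ _ _ hR2 h h'

/-- The mark vector need not be cleared between searches: if distinct dependent
indices `i ≠ i'` are used as distinct marks, then the search for `i'` started
from the marks `c₁` left over by the search for `i` produces the same set as a
search for `i'` started from the freshly initialized marks `c₀`. -/
theorem stmt_8 (n m ℓ : ℕ) (a b : ℕ → ℕ)
    (hn : n ≤ ℓ) (hm : m ≤ ℓ)
    (ha : ∀ k, n < k → k ≤ ℓ → a k < k ∧ 1 ≤ a k)
    (hb : ∀ k, n < k → k ≤ ℓ → b k < k ∧ 1 ≤ b k)
    (I : Set ℕ) (hI : I ⊆ Set.Icc 1 m)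
    (i i' : ℕ) (hi : i ∈ I) (hi' : i' ∈ I) (hne : i ≠ i')
    (c₀ : ℕ → ℕ) (hc₀ : ∀ k, c₀ k = 0 ∨ c₀ k = m + 1)
    (fuel₀ fuel₁ fuel₂ : ℕ)
    (c₁ c₂ c₃ : ℕ → ℕ) (S S' S'' : Set ℕ)
    (h₀ : dfs a b n i (m + 1) fuel₀ [ℓ - m + i] c₀ ∅ = some (c₁, S))
    (h₁ : dfs a b n i' (m + 1) fuel₁ [ℓ - m + i'] c₁ ∅ = some (c₂, S'))
    (h₂ : dfs a b n i' (m + 1) fuel₂ [ℓ - m + i'] c₀ ∅ = some (c₃, S'')) :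
    S' = S'' := by
  have hiI := hI hi
  have hi'I := hI hi'
  simp only [Set.mem_Icc] at hiI hi'I
  have hmarks := dfs_marks a b n i (m + 1) fuel₀ _ _ _ _ _ h₀
  have hR : MarkRel i' (m + 1) c₁ c₀ := by
    intro ν
    rcases hmarks ν with h | ⟨h, hne'⟩
    · rw [h]
    · rcases hc₀ ν with h0 | h0
      · rw [h, h0]
        constructor <;> rintro (h' | h') <;> omega
      · exact absurd h0 hne'
  exact dfs_sim a b n i' (m + 1) fuel₁ fuel₂ _ _ _ _ _ _ _ _ hR h₁ h₂
end

section
/- Invariant of the differentiated reverse sweep: at the beginning of each iteration k of the reverse adjoint-derivative sweep (with ẋ the j-th unit vector), for all p ≤ k, if the adjoint derivative value v̄̇_p is nonzero then j ∈ M_p, where M_p are the sets of the reverse Hessian sparsity algorithm at the corresponding stage. -/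
/-!
Each iteration `k` of the differentiated reverse sweep adds to `v̄̇_{a[k]}` and `v̄̇_{b[k]}` a sum of
three products: `∂φ_k · v̄̇_k`, which is nonzero only if `j ∈ M_k`, and second-order terms
`∂²φ_k · v̄_k · v̇_q`, which are nonzero only if the corresponding nonlinearity flag is set and
`j ∈ X_q`. These are exactly the sets Algorithm 6 merges into `M_{a[k]}` and `M_{b[k]}`, so the
invariant `v̄̇_p ≠ 0 → j ∈ M_p` survives each iteration; when `d_k` is false both the adjoint and
its derivative vanish at `k`, so neither side changes.
-/

/-- One step of the reverse Hessian sparsity sweep (Algorithm 6) at node `k`. -/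
def step6 (a b : ℕ → ℕ) (LN RN JN d : ℕ → Bool) (X : ℕ → Set ℕ)
    (M : ℕ → Set ℕ) (k : ℕ) : ℕ → Set ℕ :=
  if d k then
    fun p => M p ∪ {q | (p = a k ∨ p = b k) ∧ q ∈ M k}
      ∪ {q | LN k = true ∧ (p = a k ∨ p = b k) ∧ q ∈ X (a k)}
      ∪ {q | RN k = true ∧ (p = a k ∨ p = b k) ∧ q ∈ X (b k)}
      ∪ {q | JN k = true ∧ p = a k ∧ q ∈ X (b k)}
      ∪ {q | JN k = true ∧ p = b k ∧ q ∈ X (a k)}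
  else M

section SparsityPattern

variable {R : Type*} [NonUnitalNonAssocSemiring R] {j : ℕ}

lemma ite_add_ite_ne_zero {P Q : Prop} [Decidable P] [Decidable Q] {x y : R}
    (h : (if P then x else 0) + (if Q then y else 0) ≠ 0) : (P ∧ x ≠ 0) ∨ (Q ∧ y ≠ 0) := by
  by_contra hc
  push Not at hc
  split_ifs at h with hP hQ <;> simp_all

lemma flag_and_mem_of_mul_mul_ne_zero {flag : Bool} {c v w : R} {S : Set ℕ}
    (hflag : flag = false → c = 0) (hw : w ≠ 0 → j ∈ S) (h : c * v * w ≠ 0) :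
    flag = true ∧ j ∈ S := by
  refine ⟨?_, hw (right_ne_zero_of_mul h)⟩
  by_contra hf
  exact left_ne_zero_of_mul (left_ne_zero_of_mul h) (hflag (by simpa using hf))

lemma mem_of_adjoint_update_ne_zero {F G : Bool} {f f₁ f₂ u v w₁ w₂ : R} {S S₁ S₂ : Set ℕ}
    (hF : F = false → f₁ = 0) (hG : G = false → f₂ = 0) (hu : u ≠ 0 → j ∈ S)
    (hw₁ : w₁ ≠ 0 → j ∈ S₁) (hw₂ : w₂ ≠ 0 → j ∈ S₂)
    (h : f * u + f₁ * v * w₁ + f₂ * v * w₂ ≠ 0) :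
    j ∈ S ∨ (F = true ∧ j ∈ S₁) ∨ (G = true ∧ j ∈ S₂) := by
  by_cases hfu : f * u = 0
  · by_cases h₁ : f₁ * v * w₁ = 0
    · have h₂ : f₂ * v * w₂ ≠ 0 := by simpa [hfu, h₁] using h
      exact Or.inr (Or.inr (flag_and_mem_of_mul_mul_ne_zero hG hw₂ h₂))
    · exact Or.inr (Or.inl (flag_and_mem_of_mul_mul_ne_zero hF hw₁ h₁))
  · exact Or.inl (hu (right_ne_zero_of_mul hfu))

end SparsityPattern

section Step6

variable {a b : ℕ → ℕ} {LN RN JN d : ℕ → Bool} {X : ℕ → Set ℕ} {M : ℕ → Set ℕ} {k p j : ℕ}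

lemma subset_step6 : M p ⊆ step6 a b LN RN JN d X M k p := by
  unfold step6
  split_ifs
  · intro q hq
    simp [hq]
  · exact subset_rfl

lemma mem_step6_of_eq_left (hdk : d k = true) (hp : p = a k)
    (h : j ∈ M k ∨ (LN k = true ∧ j ∈ X (a k)) ∨ (JN k = true ∧ j ∈ X (b k))) :
    j ∈ step6 a b LN RN JN d X M k p := by
  simp only [step6, hdk, if_true, Set.mem_union, Set.mem_ofPred_eq, hp]
  tauto

lemma mem_step6_of_eq_right (hdk : d k = true) (hp : p = b k)
    (h : j ∈ M k ∨ (JN k = true ∧ j ∈ X (a k)) ∨ (RN k = true ∧ j ∈ X (b k))) :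
    j ∈ step6 a b LN RN JN d X M k p := by
  simp only [step6, hdk, if_true, Set.mem_union, Set.mem_ofPred_eq, hp]
  tauto

end Step6

/-- Iteration `k` of the differentiated reverse sweep: `w` is `v̄̇` and `u` is `v̄_k` before it. -/
def adjointDerivStep (a b : ℕ → ℕ) (p1 p2 p11 p12 p22 vdot : ℕ → ℝ) (k : ℕ) (u : ℝ)
    (w : ℕ → ℝ) (p : ℕ) : ℝ :=
  w p
    + (if p = a k then p1 k * w k + p11 k * u * vdot (a k) + p12 k * u * vdot (b k) else 0)
    + (if p = b k then p2 k * w k + p12 k * u * vdot (a k) + p22 k * u * vdot (b k) else 0)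

lemma mem_step6_of_adjointDerivStep_ne_zero {a b : ℕ → ℕ} {LN RN JN d : ℕ → Bool}
    {X : ℕ → Set ℕ} {M : ℕ → Set ℕ} {j k : ℕ} {p1 p2 p11 p12 p22 vdot : ℕ → ℝ} {u : ℝ}
    {w w' : ℕ → ℝ}
    (hLN : LN k = false → p11 k = 0) (hRN : RN k = false → p22 k = 0)
    (hJN : JN k = false → p12 k = 0) (hX : ∀ q, vdot q ≠ 0 → j ∈ X q)
    (hd : d k = false → u = 0 ∧ w k = 0) (hM : ∀ p, w p ≠ 0 → j ∈ M p)
    (hw' : ∀ p, w' p = adjointDerivStep a b p1 p2 p11 p12 p22 vdot k u w p) (p : ℕ)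
    (hp : w' p ≠ 0) : j ∈ step6 a b LN RN JN d X M k p := by
  rw [hw', adjointDerivStep] at hp
  cases hdk : d k
  · obtain ⟨rfl, hwk⟩ := hd hdk
    simp only [step6, hdk, Bool.false_eq_true, if_false]
    exact hM p (by simpa [hwk] using hp)
  by_cases hwp : w p = 0
  · rw [hwp, zero_add] at hp
    rcases ite_add_ite_ne_zero hp with ⟨hpa, hA⟩ | ⟨hpb, hB⟩
    · exact mem_step6_of_eq_left hdk hpa <|
        mem_of_adjoint_update_ne_zero hLN hJN (hM k) (hX _) (hX _) hA
    · exact mem_step6_of_eq_right hdk hpb <|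
        mem_of_adjoint_update_ne_zero hJN hRN (hM k) (hX _) (hX _) hB
  · exact subset_step6 (hM p hwp)

/-- Stage `s` is the beginning of iteration `k = ℓ - s` of the reverse sweep with `ẋ = e_j`:
`vbdot s p` is `v̄̇_p` then, `vbar s p` is `v̄_p`, `vdot p` is `v̇_p`, `p1,…,p22` are the first and
second partials of `φ_k` at the evaluation point, and `M s` is the state of Algorithm 6. -/
theorem stmt_15_general (n ℓ : ℕ) (a b : ℕ → ℕ)
    (LN RN JN d : ℕ → Bool) (X : ℕ → Set ℕ) (j : ℕ)
    (p1 p2 p11 p12 p22 : ℕ → ℝ)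
    (hLN : ∀ k, LN k = false → p11 k = 0)
    (hRN : ∀ k, RN k = false → p22 k = 0)
    (hJN : ∀ k, JN k = false → p12 k = 0)
    (vdot : ℕ → ℝ) (hX : ∀ k, vdot k ≠ 0 → j ∈ X k)
    (vbar vbdot : ℕ → ℕ → ℝ)
    (hd : ∀ s k, d k = false → vbar s k = 0 ∧ vbdot s k = 0)
    (hv0 : ∀ p, vbdot 0 p = 0)
    (hupd : ∀ s, s < ℓ - n → ∀ p,
      vbdot (s + 1) p = vbdot s p
        + (if p = a (ℓ - s) then
            p1 (ℓ - s) * vbdot s (ℓ - s)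
            + p11 (ℓ - s) * vbar s (ℓ - s) * vdot (a (ℓ - s))
            + p12 (ℓ - s) * vbar s (ℓ - s) * vdot (b (ℓ - s)) else 0)
        + (if p = b (ℓ - s) then
            p2 (ℓ - s) * vbdot s (ℓ - s)
            + p12 (ℓ - s) * vbar s (ℓ - s) * vdot (a (ℓ - s))
            + p22 (ℓ - s) * vbar s (ℓ - s) * vdot (b (ℓ - s)) else 0))
    (M : ℕ → ℕ → Set ℕ)
    (hMs : ∀ s, s < ℓ - n → M (s + 1) = step6 a b LN RN JN d X (M s) (ℓ - s)) :
    ∀ s, s ≤ ℓ - n → ∀ p, p ≤ ℓ - s → vbdot s p ≠ 0 → j ∈ M s p := by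
  suffices invariant : ∀ s, s ≤ ℓ - n → ∀ p, vbdot s p ≠ 0 → j ∈ M s p from
    fun s hs p _ => invariant s hs p
  intro s
  induction s with
  | zero => exact fun _ p hp => absurd (hv0 p) hp
  | succ s ih =>
    intro hs
    rw [hMs s (by omega)]
    exact mem_step6_of_adjointDerivStep_ne_zero (hLN _) (hRN _) (hJN _) hX (hd s _)
      (ih (by omega)) (hupd s (by omega))

/-- Invariant of the differentiated reverse adjoint sweep (with `ẋ = e_j`):
stage `s` is the beginning of iteration `k = ℓ - s`; `vbdot s p` is the value
`v̄̇_p` then, `vbar s p` is `v̄_p`, `vdot p` is the forward directional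
derivative `v̇_p`, `p1,…,p22` are the first and second partials of `φ_k` at the
evaluation point, and `M s` is the state of Algorithm 6 at the same stage.
At the beginning of each iteration, for all `p ≤ k`, `v̄̇_p ≠ 0 → j ∈ M_p`. -/
theorem stmt_15 (n ℓ : ℕ) (a b : ℕ → ℕ) (hn : n ≤ ℓ)
    (ha : ∀ k, n < k → k ≤ ℓ → a k < k ∧ 1 ≤ a k)
    (hb : ∀ k, n < k → k ≤ ℓ → b k < k ∧ 1 ≤ b k)
    (LN RN JN d : ℕ → Bool) (X : ℕ → Set ℕ) (j : ℕ)
    (p1 p2 p11 p12 p22 : ℕ → ℝ)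
    (hLN : ∀ k, LN k = false → p11 k = 0)
    (hRN : ∀ k, RN k = false → p22 k = 0)
    (hJN : ∀ k, JN k = false → p12 k = 0)
    (vdot : ℕ → ℝ) (hX : ∀ k, vdot k ≠ 0 → j ∈ X k)
    (vbar vbdot : ℕ → ℕ → ℝ)
    (hd : ∀ s k, d k = false → vbar s k = 0 ∧ vbdot s k = 0)
    (hv0 : ∀ p, vbdot 0 p = 0)
    (hupd : ∀ s, s < ℓ - n → ∀ p,
      vbdot (s + 1) p = vbdot s p
        + (if p = a (ℓ - s) then
            p1 (ℓ - s) * vbdot s (ℓ - s)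
            + p11 (ℓ - s) * vbar s (ℓ - s) * vdot (a (ℓ - s))
            + p12 (ℓ - s) * vbar s (ℓ - s) * vdot (b (ℓ - s)) else 0)
        + (if p = b (ℓ - s) then
            p2 (ℓ - s) * vbdot s (ℓ - s)
            + p12 (ℓ - s) * vbar s (ℓ - s) * vdot (a (ℓ - s))
            + p22 (ℓ - s) * vbar s (ℓ - s) * vdot (b (ℓ - s)) else 0))
    (M : ℕ → ℕ → Set ℕ)
    (hM0 : ∀ p, M 0 p = ∅)
    (hMs : ∀ s, s < ℓ - n → M (s + 1) = step6 a b LN RN JN d X (M s) (ℓ - s)) :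
    ∀ s, s ≤ ℓ - n → ∀ p, p ≤ ℓ - s → vbdot s p ≠ 0 → j ∈ M s p :=
  stmt_15_general n ℓ a b LN RN JN d X j p1 p2 p11 p12 p22 hLN hRN hJN vdot hX vbar vbdot hd hv0
    hupd M hMs
end
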